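/- For every real number t with 0 ≤ t < 1/30, the perturbed system x₁² − x₂² + t·x₁x₂² − 1 = 0, x₁² + x₂² − 2 = 0 has exactly four real solutions, each of which is a simple root of the system, and all of them lie in the square [−2,2]². -/
import Mathlib

/-- A point `x ∈ ℝⁿ` is a *simple root* of the system `f₁ = ⋯ = fₙ = 0` if all the
polynomials vanish at `x` and the Jacobian determinant is nonzero. -/
def IsSimpleRoot {n : ℕ} (f : Fin n → MvPolynomial (Fin n) ℝ) (x : Fin n → ℝ) : Prop :=
  (∀ i, MvPolynomial.eval x (f i) = 0) ∧
  (Matrix.of fun i j : Fin n => MvPolynomial.eval x (MvPolynomial.pderiv j (f i))).det ≠ 0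

/-- The perturbed system (14) of the paper:
`x₁² − x₂² + t·x₁x₂² − 1 = 0`, `x₁² + x₂² − 2 = 0`. -/
noncomputable def sys9 (t : ℝ) : Fin 2 → MvPolynomial (Fin 2) ℝ :=
  ![MvPolynomial.X 0 ^ 2 - MvPolynomial.X 1 ^ 2 +
      MvPolynomial.C t * (MvPolynomial.X 0 * MvPolynomial.X 1 ^ 2) - 1,
    MvPolynomial.X 0 ^ 2 + MvPolynomial.X 1 ^ 2 - 2]

/-- The reduced one-variable function obtained by eliminating `x₂`. -/
def Gf (t a : ℝ) : ℝ := 2 * a ^ 2 - 3 + t * a * (2 - a ^ 2)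

lemma pd_two (j : Fin 2) : MvPolynomial.pderiv j (2 : MvPolynomial (Fin 2) ℝ) = 0 := by
  have : (2 : MvPolynomial (Fin 2) ℝ) = MvPolynomial.C 2 := by rw [map_ofNat]
  rw [this, MvPolynomial.pderiv_C]

lemma sol_iff (t : ℝ) (x : Fin 2 → ℝ) :
    (∀ i, MvPolynomial.eval x (sys9 t i) = 0) ↔
      (x 0 ^ 2 + x 1 ^ 2 = 2 ∧ Gf t (x 0) = 0) := by
  have h : (∀ i, MvPolynomial.eval x (sys9 t i) = 0) ↔
      (x 0 ^ 2 - x 1 ^ 2 + t * (x 0 * x 1 ^ 2) - 1 = 0 ∧ x 0 ^ 2 + x 1 ^ 2 - 2 = 0) := by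
    rw [Fin.forall_fin_two]
    simp [sys9]
  rw [h]
  unfold Gf
  constructor
  · rintro ⟨h1, h2⟩
    refine ⟨by linarith, ?_⟩
    linear_combination h1 + h2 - t * x 0 * h2
  · rintro ⟨h1, h2⟩
    refine ⟨?_, by linarith⟩
    linear_combination h2 + (t * x 0 - 1) * h1

lemma det_eq (t : ℝ) (x : Fin 2 → ℝ) :
    (Matrix.of fun i j : Fin 2 => MvPolynomial.eval x (MvPolynomial.pderiv j (sys9 t i))).det
      = 2 * x 1 * (4 * x 0 + t * x 1 ^ 2 - 2 * t * x 0 ^ 2) := by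
  rw [Matrix.det_fin_two]
  simp [sys9, MvPolynomial.pderiv_X, pd_two]
  ring

lemma Gf_mono (t : ℝ) (ht0 : 0 ≤ t) (ht : t ≤ 1 / 30) :
    StrictMonoOn (Gf t) (Set.Icc 0 (Real.sqrt 2)) := by
  have hs2 : Real.sqrt 2 ^ 2 = 2 := Real.sq_sqrt (by norm_num)
  have hs15 : Real.sqrt 2 < 3 / 2 := by nlinarith [Real.sqrt_nonneg 2]
  intro a ha b hb hab
  simp only [Set.mem_Icc] at ha hb
  have hb0 : 0 < b := lt_of_le_of_lt ha.1 hab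
  have key : 0 < 2 * (a + b) + t * (2 - (a ^ 2 + a * b + b ^ 2)) := by
    nlinarith [mul_nonneg (sub_nonneg.mpr ht) (sq_nonneg a),
      mul_nonneg (sub_nonneg.mpr ht) (sq_nonneg b),
      mul_nonneg (sub_nonneg.mpr ht) (mul_nonneg ha.1 hb0.le),
      mul_nonneg hb0.le (sub_nonneg.mpr hb.2),
      mul_nonneg hb0.le (sub_nonneg.mpr hs15.le),
      mul_nonneg ha.1 (sub_nonneg.mpr hab.le),
      mul_nonneg hb0.le (sub_nonneg.mpr hab.le)]
  have := mul_pos (sub_pos.mpr hab) key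
  unfold Gf
  nlinarith [this]

lemma Gf_anti (t : ℝ) (ht0 : 0 ≤ t) (ht : t ≤ 1 / 30) :
    StrictAntiOn (Gf t) (Set.Icc (-Real.sqrt 2) (-1)) := by
  have hs2 : Real.sqrt 2 ^ 2 = 2 := Real.sq_sqrt (by norm_num)
  intro a ha b hb hab
  simp only [Set.mem_Icc] at ha hb
  have hX : (0:ℝ) ≤ a ^ 2 + a * b + b ^ 2 := by nlinarith [sq_nonneg (a + b), sq_nonneg a, sq_nonneg b]
  have key : 2 * (a + b) + t * (2 - (a ^ 2 + a * b + b ^ 2)) < 0 := by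
    nlinarith [mul_nonneg ht0 hX, ha.2, hb.2]
  have := mul_pos (sub_pos.mpr hab) (neg_pos.mpr key)
  unfold Gf
  nlinarith [this]

lemma Gf_neg (t : ℝ) (ht0 : 0 ≤ t) (ht : t ≤ 1 / 30) {a : ℝ}
    (ha1 : -1 ≤ a) (ha2 : a ≤ 1) : Gf t a < 0 := by
  have h : (0:ℝ) ≤ 2 - 2 * a + a ^ 3 := by
    nlinarith [mul_nonneg (by linarith : (0:ℝ) ≤ 1 + a) (sq_nonneg (a - 1)), sq_nonneg (a - 1/2)]
  unfold Gf
  nlinarith [mul_nonneg ht0 h, sq_nonneg a]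

lemma Gf_sqrt (t : ℝ) : Gf t (Real.sqrt 2) = 1 := by
  have hs2 : Real.sqrt 2 ^ 2 = 2 := Real.sq_sqrt (by norm_num)
  unfold Gf
  linear_combination (2 - t * Real.sqrt 2) * hs2

lemma Gf_neg_sqrt (t : ℝ) : Gf t (-Real.sqrt 2) = 1 := by
  have hs2 : Real.sqrt 2 ^ 2 = 2 := Real.sq_sqrt (by norm_num)
  unfold Gf
  linear_combination (2 + t * Real.sqrt 2) * hs2

lemma Gf_cont (t : ℝ) : Continuous (Gf t) := by unfold Gf; fun_prop

set_option maxHeartbeats 1000000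

/-- For every `t` with `0 ≤ t < 1/30`, the perturbed system
`x₁² − x₂² + t·x₁x₂² − 1 = 0`, `x₁² + x₂² − 2 = 0` has exactly four real
solutions, each a simple root, all lying in the square `[−2,2]²`. -/
theorem stmt_9 (t : ℝ) (ht0 : 0 ≤ t) (ht : t < 1 / 30) :
    {x : Fin 2 → ℝ | ∀ i, MvPolynomial.eval x (sys9 t i) = 0}.ncard = 4 ∧
    (∀ x : Fin 2 → ℝ, (∀ i, MvPolynomial.eval x (sys9 t i) = 0) →
      IsSimpleRoot (sys9 t) x ∧ ∀ i, x i ∈ Set.Icc (-2 : ℝ) 2) := by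
  have h30 : t ≤ 1 / 30 := ht.le
  set s : ℝ := Real.sqrt 2 with hs_def
  have hs2 : s ^ 2 = 2 := Real.sq_sqrt (by norm_num)
  have hs0 : 0 < s := Real.sqrt_pos.mpr (by norm_num)
  have hs1 : 1 < s := by nlinarith
  -- roots of Gf t
  obtain ⟨α, hαmem, hα⟩ :=
    intermediate_value_Icc hs0.le ((Gf_cont t).continuousOn)
      (by
        constructor
        · show Gf t 0 ≤ 0; unfold Gf; norm_num
        · show (0:ℝ) ≤ Gf t s; rw [Gf_sqrt]; norm_num)
  obtain ⟨β, hβmem, hβ⟩ :=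
    intermediate_value_Icc' (by linarith : -s ≤ (-1:ℝ)) ((Gf_cont t).continuousOn)
      (by
        constructor
        · show Gf t (-1) ≤ 0; unfold Gf; nlinarith
        · show (0:ℝ) ≤ Gf t (-s); rw [Gf_neg_sqrt]; norm_num)
  simp only [Set.mem_Icc] at hαmem hβmem
  have hα1 : 1 < α := by
    by_contra h
    push_neg at h
    exact absurd hα (Gf_neg t ht0 h30 (by linarith [hαmem.1]) h).ne
  have hαs : α < s := lt_of_le_of_ne hαmem.2 (fun h => by rw [h, Gf_sqrt] at hα; norm_num at hα)
  have hβ1 : β < -1 := lt_of_le_of_ne hβmem.2 (fun h => by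
    rw [h] at hβ; unfold Gf at hβ; nlinarith)
  have hβs : -s < β := lt_of_le_of_ne hβmem.1 (fun h => by
    rw [← h, Gf_neg_sqrt] at hβ; norm_num at hβ)
  have hα2 : α ^ 2 < 2 := by nlinarith
  have hβ2 : β ^ 2 < 2 := by nlinarith
  set c : ℝ := Real.sqrt (2 - α ^ 2) with hc_def
  set d : ℝ := Real.sqrt (2 - β ^ 2) with hd_def
  have hc2 : c ^ 2 = 2 - α ^ 2 := Real.sq_sqrt (by linarith)
  have hd2 : d ^ 2 = 2 - β ^ 2 := Real.sq_sqrt (by linarith)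
  have hcpos : 0 < c := Real.sqrt_pos.mpr (by linarith)
  have hdpos : 0 < d := Real.sqrt_pos.mpr (by linarith)
  have hαβ : β < α := by linarith
  -- the solution set
  have hset : {x : Fin 2 → ℝ | ∀ i, MvPolynomial.eval x (sys9 t i) = 0} =
      {![α, c], ![α, -c], ![β, d], ![β, -d]} := by
    ext x
    rw [Set.mem_setOf_eq, sol_iff]
    constructor
    · rintro ⟨hsum, hg⟩
      have hx1sq : 0 ≤ x 1 ^ 2 := sq_nonneg _
      have hx0le : x 0 ≤ s := by nlinarith
      have hx0ge : -s ≤ x 0 := by nlinarith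
      have hx0out : x 0 < -1 ∨ 1 < x 0 := by
        by_contra h
        push_neg at h
        exact absurd hg (Gf_neg t ht0 h30 h.1 h.2).ne
      rcases hx0out with h1 | h1
      · -- x 0 = β
        have hx0 : x 0 = β :=
          (Gf_anti t ht0 h30).injOn ⟨hx0ge, h1.le⟩ ⟨hβmem.1, hβmem.2⟩ (by rw [hg, hβ])
        have hx1 : x 1 = d ∨ x 1 = -d := by
          have : (x 1 - d) * (x 1 + d) = 0 := by
            have h' : x 1 ^ 2 = d ^ 2 := by rw [hd2, ← hx0]; linarith
            linear_combination h'
          rcases mul_eq_zero.mp this with h | h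
          · left; linarith
          · right; linarith
        rcases hx1 with h2 | h2
        · right; right; left
          funext i; fin_cases i <;> simp [hx0, h2]
        · right; right; right
          funext i; fin_cases i <;> simp [hx0, h2]
      · -- x 0 = α
        have hx0 : x 0 = α :=
          (Gf_mono t ht0 h30).injOn ⟨by linarith, hx0le⟩ ⟨hαmem.1, hαmem.2⟩ (by rw [hg, hα])
        have hx1 : x 1 = c ∨ x 1 = -c := by
          have : (x 1 - c) * (x 1 + c) = 0 := by
            have h' : x 1 ^ 2 = c ^ 2 := by rw [hc2, ← hx0]; linarith
            linear_combination h'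
          rcases mul_eq_zero.mp this with h | h
          · left; linarith
          · right; linarith
        rcases hx1 with h2 | h2
        · left
          funext i; fin_cases i <;> simp [hx0, h2]
        · right; left
          funext i; fin_cases i <;> simp [hx0, h2]
    · intro hx
      rcases hx with h | h | h | h <;> subst h
      · exact ⟨by simp; linear_combination hc2, by simpa using hα⟩
      · exact ⟨by simp; linear_combination hc2, by simpa using hα⟩
      · exact ⟨by simp; linear_combination hd2, by simpa using hβ⟩
      · exact ⟨by simp; linear_combination hd2, by simpa using hβ⟩
  have h12 : (![α, c] : Fin 2 → ℝ) ≠ ![α, -c] := fun h => by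
    have := congrFun h 1; simp at this; linarith
  have h13 : (![α, c] : Fin 2 → ℝ) ≠ ![β, d] := fun h => by
    have := congrFun h 0; simp at this; linarith
  have h14 : (![α, c] : Fin 2 → ℝ) ≠ ![β, -d] := fun h => by
    have := congrFun h 0; simp at this; linarith
  have h23 : (![α, -c] : Fin 2 → ℝ) ≠ ![β, d] := fun h => by
    have := congrFun h 0; simp at this; linarith
  have h24 : (![α, -c] : Fin 2 → ℝ) ≠ ![β, -d] := fun h => by
    have := congrFun h 0; simp at this; linarith
  have h34 : (![β, d] : Fin 2 → ℝ) ≠ ![β, -d] := fun h => by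
    have := congrFun h 1; simp at this; linarith
  constructor
  · rw [hset,
      Set.ncard_insert_of_notMem (by simp [h12, h13, h14]) (Set.toFinite _),
      Set.ncard_insert_of_notMem (by simp [h23, h24]) (Set.toFinite _),
      Set.ncard_pair h34]
  · intro x hx
    obtain ⟨hsum, hg⟩ := (sol_iff t x).mp hx
    have hx1sq : (0:ℝ) ≤ x 1 ^ 2 := sq_nonneg _
    have hx02 : x 0 ^ 2 ≤ 2 := by nlinarith
    have hx12 : x 1 ^ 2 ≤ 2 := by nlinarith [sq_nonneg (x 0)]
    have hx1ne : x 1 ≠ 0 := by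
      intro h
      rw [h] at hsum
      have hx0sq : x 0 ^ 2 = 2 := by nlinarith
      unfold Gf at hg
      have hcontra : (1:ℝ) = 0 := by
        linear_combination hg - 2 * hx0sq + t * x 0 * hx0sq
      norm_num at hcontra
    have hx0out : x 0 < -1 ∨ 1 < x 0 := by
      by_contra h
      push_neg at h
      exact absurd hg (Gf_neg t ht0 h30 h.1 h.2).ne
    constructor
    · refine ⟨hx, ?_⟩
      rw [det_eq]
      have hfac : 4 * x 0 + t * x 1 ^ 2 - 2 * t * x 0 ^ 2
          = 4 * x 0 + 2 * t - 3 * t * x 0 ^ 2 := by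
        linear_combination t * hsum
      rw [hfac]
      refine mul_ne_zero (mul_ne_zero two_ne_zero hx1ne) ?_
      rcases hx0out with h1 | h1
      · have : 4 * x 0 + 2 * t - 3 * t * x 0 ^ 2 < 0 := by
          nlinarith [mul_nonneg ht0 (sq_nonneg (x 0))]
        exact this.ne
      · have : 0 < 4 * x 0 + 2 * t - 3 * t * x 0 ^ 2 := by
          nlinarith [mul_nonneg ht0 (by linarith : (0:ℝ) ≤ 2 - x 0 ^ 2)]
        exact this.ne'
    · intro i
      fin_cases i
      · show x 0 ∈ Set.Icc (-2:ℝ) 2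
        exact Set.mem_Icc.mpr ⟨by nlinarith [sq_nonneg (x 0 + 2)], by nlinarith [sq_nonneg (x 0 - 2)]⟩
      · show x 1 ∈ Set.Icc (-2:ℝ) 2
        exact Set.mem_Icc.mpr ⟨by nlinarith [sq_nonneg (x 1 + 2)], by nlinarith [sq_nonneg (x 1 - 2)]⟩
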